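/- arXiv:2605.03520 — 3 statements merged into one kernel-verified Lean document; each statement's English description precedes it below -/
import Mathlib

section
/- Let f : ℝ^d → ℝ be a convex function such that for every y ∈ ℝ^d, if the function z ↦ ⟨y, z⟩ − f(z) is bounded above on ℝ^d, then ⟨y, x⟩ − f(x) ≤ 0 for all x ∈ ℝ^d (i.e. the convex conjugate f* is nonpositive on its effective domain). Define h : ℝ^d → ℝ by h(x) = ‖x‖ · f(x/‖x‖) for x ≠ 0 and h(0) = 0. Then h is sublinear, i.e. convex and positively homogeneous. -/
/-!
Write `h x = P(‖x‖, x)` with the perspective `P(t, x) = t f(x / t)`. `P` is positively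
homogeneous and, `f` being convex, subadditive, so `h x + h y ≥ P(‖x‖ + ‖y‖, x + y)`. Lowering the
scale to `‖x + y‖ ≤ ‖x‖ + ‖y‖` needs `t ↦ P(t, x)` monotone, i.e. `r f q ≤ f (r q)` for `r ≤ 1`.
A convex function finite on `ℝ^d` has a subgradient `y` at `q`; then `z ↦ ⟪y, z⟫ - f z` is
bounded above, so the hypothesis on `f*` gives `⟪y, ·⟫ ≤ f`, and
`f (r q) ≥ f q + (r - 1) ⟪y, q⟫ ≥ r f q`.
-/

open RealInnerProductSpace Set

/-- For `t = 0` this is `0` (as `0⁻¹ = 0` in Lean), which matches `h 0 = 0`. -/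
noncomputable def perspective {E : Type*} [AddCommGroup E] [Module ℝ E] (f : E → ℝ) (t : ℝ)
    (x : E) : ℝ :=
  t * f (t⁻¹ • x)

def ConjugateNonposOnDomain {E : Type*} [NormedAddCommGroup E] [InnerProductSpace ℝ E]
    (f : E → ℝ) : Prop :=
  ∀ y : E, BddAbove (range fun z => ⟪y, z⟫ - f z) → ∀ x, ⟪y, x⟫ - f x ≤ 0

section Module

variable {E : Type*} [AddCommGroup E] [Module ℝ E] {f : E → ℝ}

theorem perspective_mul_smul (f : E → ℝ) (c t : ℝ) (x : E) :
    perspective f (c * t) (c • x) = c * perspective f t x := by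
  rcases eq_or_ne c 0 with rfl | hc
  · simp [perspective]
  · have hscale : (c * t)⁻¹ * c = t⁻¹ := by
      rw [mul_inv, mul_comm c⁻¹, mul_assoc, inv_mul_cancel₀ hc, mul_one]
    simp only [perspective, smul_smul, hscale]
    ring

theorem ConvexOn.perspective_add_le (hf : ConvexOn ℝ univ f) {a b : ℝ} (ha : 0 < a)
    (hb : 0 < b) (x y : E) :
    perspective f (a + b) (x + y) ≤ perspective f a x + perspective f b y := by
  have hab : 0 < a + b := by positivity
  have hcomb := hf.2 (mem_univ (a⁻¹ • x)) (mem_univ (b⁻¹ • y))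
    (div_nonneg ha.le hab.le) (div_nonneg hb.le hab.le) (by field_simp)
  have hpoint : (a / (a + b)) • a⁻¹ • x + (b / (a + b)) • b⁻¹ • y = (a + b)⁻¹ • (x + y) := by
    rw [smul_smul, smul_smul, smul_add]
    congr 2 <;> field_simp
  rw [hpoint, smul_eq_mul, smul_eq_mul] at hcomb
  calc perspective f (a + b) (x + y)
      ≤ (a + b) * (a / (a + b) * f (a⁻¹ • x) + b / (a + b) * f (b⁻¹ • y)) :=
        mul_le_mul_of_nonneg_left hcomb hab.le
    _ = perspective f a x + perspective f b y := by
        simp only [perspective]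
        field_simp

theorem convexOn_univ_of_subadditive_of_homogeneous {g : E → ℝ}
    (hadd : ∀ x y, g (x + y) ≤ g x + g y) (hsmul : ∀ c : ℝ, 0 ≤ c → ∀ x, g (c • x) = c * g x) :
    ConvexOn ℝ univ g := by
  refine ⟨convex_univ, fun x _ y _ a b ha hb _ => ?_⟩
  calc g (a • x + b • y) ≤ g (a • x) + g (b • y) := hadd _ _
    _ = a • g x + b • g y := by rw [hsmul a ha, hsmul b hb, smul_eq_mul, smul_eq_mul]

end Module

section NormedSpace

variable {E : Type*} [NormedAddCommGroup E] [NormedSpace ℝ E] {f : E → ℝ}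

theorem perspective_norm_smul (f : E → ℝ) {c : ℝ} (hc : 0 ≤ c) (x : E) :
    perspective f ‖c • x‖ (c • x) = c * perspective f ‖x‖ x := by
  rw [norm_smul, Real.norm_of_nonneg hc, perspective_mul_smul]

/-- The point `(x₀, f x₀)` is separated from the open strict epigraph of `f`. -/
theorem ConvexOn.exists_dual_sub_le_sub (hf : ConvexOn ℝ univ f) (hcont : Continuous f)
    (x₀ : E) : ∃ φ : StrongDual ℝ E, ∀ z, φ z - f z ≤ φ x₀ - f x₀ := by
  have hopen : IsOpen {p : E × ℝ | p.1 ∈ univ ∧ f p.1 < p.2} := by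
    simpa only [mem_univ, true_and] using
      isOpen_lt (f := fun p : E × ℝ => f p.1) (by fun_prop) continuous_snd
  obtain ⟨ψ, hψ⟩ := geometric_hahn_banach_open_point hf.convex_strict_epigraph hopen
    (by simp : (x₀, f x₀) ∉ {p : E × ℝ | p.1 ∈ univ ∧ f p.1 < p.2})
  set α := ψ (0, 1)
  have hsplit (z : E) (t : ℝ) : ψ (z, t) = ψ (z, 0) + t * α := by
    have : (z, t) = (z, (0 : ℝ)) + t • ((0 : E), (1 : ℝ)) := by simp
    rw [this, map_add, map_smul, smul_eq_mul]
  have hψ' (z : E) (t : ℝ) (ht : f z < t) : ψ (z, 0) + t * α < ψ (x₀, 0) + f x₀ * α := by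
    simpa only [← hsplit] using hψ (z, t) ⟨mem_univ z, ht⟩
  have hα : α < 0 := by linarith [hψ' x₀ (f x₀ + 1) (by linarith)]
  refine ⟨(-α)⁻¹ • ψ.comp (ContinuousLinearMap.inl ℝ E ℝ), fun z => ?_⟩
  simp only [FunLike.coe_smul, Pi.smul_apply, ContinuousLinearMap.comp_apply,
    ContinuousLinearMap.inl_apply, smul_eq_mul]
  have hβ : 0 < (-α)⁻¹ := inv_pos.2 (neg_pos.2 hα)
  have hβα : (-α)⁻¹ * α = -1 := by rw [inv_neg, neg_mul, inv_mul_cancel₀ hα.ne]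
  suffices ∀ t, f z < t → (-α)⁻¹ * ψ (z, 0) - ((-α)⁻¹ * ψ (x₀, 0) - f x₀) ≤ t by
    linarith [le_of_forall_gt_imp_ge_of_dense this]
  intro t ht
  linear_combination mul_lt_mul_of_pos_left (hψ' z t ht) hβ + (f x₀ - t) * hβα

end NormedSpace

section InnerProductSpace

variable {E : Type*} [NormedAddCommGroup E] [InnerProductSpace ℝ E] [FiniteDimensional ℝ E]
  {f : E → ℝ}

theorem ConvexOn.exists_inner_sub_le_sub (hf : ConvexOn ℝ univ f) (x₀ : E) :
    ∃ y : E, ∀ z, ⟪y, z⟫ - f z ≤ ⟪y, x₀⟫ - f x₀ := by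
  obtain ⟨φ, hφ⟩ :=
    hf.exists_dual_sub_le_sub (continuousOn_univ.mp (hf.continuousOn isOpen_univ)) x₀
  exact ⟨(InnerProductSpace.toDual ℝ E).symm φ, by
    simpa only [InnerProductSpace.toDual_symm_apply] using hφ⟩

variable (hf : ConvexOn ℝ univ f) (hconj : ConjugateNonposOnDomain f)
include hf hconj

theorem ConvexOn.exists_subgradient_inner_le (x₀ : E) :
    ∃ y : E, (∀ z, ⟪y, z⟫ ≤ f z) ∧ ∀ z, ⟪y, z⟫ - f z ≤ ⟪y, x₀⟫ - f x₀ := by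
  obtain ⟨y, hy⟩ := hf.exists_inner_sub_le_sub x₀
  have hbdd : BddAbove (range fun z => ⟪y, z⟫ - f z) := ⟨_, forall_mem_range.2 hy⟩
  exact ⟨y, fun z => by linarith [hconj y hbdd z], hy⟩

theorem ConvexOn.mul_le_apply_smul {r : ℝ} (hr : r ≤ 1) (q : E) : r * f q ≤ f (r • q) := by
  obtain ⟨y, hminor, hsub⟩ := hf.exists_subgradient_inner_le hconj q
  have hsub_r := hsub (r • q)
  rw [real_inner_smul_right] at hsub_r
  nlinarith [mul_le_mul_of_nonpos_left (hminor q) (sub_nonpos.2 hr)]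

theorem ConvexOn.perspective_mono {s t : ℝ} (hs : 0 < s) (hst : s ≤ t) (x : E) :
    perspective f s x ≤ perspective f t x := by
  have ht : 0 < t := hs.trans_le hst
  have hpoint : t⁻¹ • x = (s / t) • s⁻¹ • x := by
    rw [smul_smul]
    congr 1
    field_simp
  have hscaled := hf.mul_le_apply_smul hconj ((div_le_one ht).2 hst) (s⁻¹ • x)
  calc perspective f s x = t * (s / t * f (s⁻¹ • x)) := by
        unfold perspective
        field_simp
    _ ≤ perspective f t x := by
        rw [perspective, hpoint]
        exact mul_le_mul_of_nonneg_left hscaled ht.le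

theorem ConvexOn.perspective_norm_le {t : ℝ} (x : E) (ht : ‖x‖ ≤ t) :
    perspective f ‖x‖ x ≤ perspective f t x := by
  rcases eq_or_ne x 0 with rfl | hx
  · obtain ⟨y, hminor, -⟩ := hf.exists_subgradient_inner_le hconj 0
    have hf0 : 0 ≤ f 0 := by simpa using hminor 0
    simpa [perspective] using mul_nonneg (norm_nonneg _ |>.trans ht) hf0
  · exact hf.perspective_mono hconj (norm_pos_iff.2 hx) ht x

theorem ConvexOn.perspective_norm_add_le (x y : E) :
    perspective f ‖x + y‖ (x + y) ≤ perspective f ‖x‖ x + perspective f ‖y‖ y := by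
  rcases eq_or_ne x 0 with rfl | hx
  · simp [perspective]
  rcases eq_or_ne y 0 with rfl | hy
  · simp [perspective]
  calc perspective f ‖x + y‖ (x + y) ≤ perspective f (‖x‖ + ‖y‖) (x + y) :=
        hf.perspective_norm_le hconj _ (norm_add_le x y)
    _ ≤ perspective f ‖x‖ x + perspective f ‖y‖ y :=
        hf.perspective_add_le (norm_pos_iff.2 hx) (norm_pos_iff.2 hy) x y

end InnerProductSpace

/-- Let `f : ℝ^d → ℝ` be convex with convex conjugate `f*` nonpositive on its
effective domain (i.e. whenever `z ↦ ⟪y, z⟫ - f z` is bounded above, `⟪y, x⟫ - f x ≤ 0` for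
all `x`).  Let `h x = ‖x‖ * f (x / ‖x‖)` for `x ≠ 0` and `h 0 = 0`. Then `h` is sublinear,
i.e. convex and positively homogeneous. -/
theorem stmt_2 {d : ℕ} (f : EuclideanSpace ℝ (Fin d) → ℝ)
    (hconv : ConvexOn ℝ Set.univ f)
    (hconj : ∀ y : EuclideanSpace ℝ (Fin d),
      BddAbove (Set.range fun z => ⟪y, z⟫ - f z) →
      ∀ x : EuclideanSpace ℝ (Fin d), ⟪y, x⟫ - f x ≤ 0)
    (h : EuclideanSpace ℝ (Fin d) → ℝ)
    (hh : ∀ x : EuclideanSpace ℝ (Fin d), x ≠ 0 → h x = ‖x‖ * f (‖x‖⁻¹ • x))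
    (hh0 : h 0 = 0) :
    ConvexOn ℝ Set.univ h ∧ ∀ c : ℝ, 0 ≤ c → ∀ x, h (c • x) = c * h x := by
  obtain rfl : h = fun x => perspective f ‖x‖ x := by
    funext x
    rcases eq_or_ne x 0 with rfl | hx
    · simp [hh0, perspective]
    · exact hh x hx
  have hhom (c : ℝ) (hc : 0 ≤ c) (x : EuclideanSpace ℝ (Fin d)) :=
    perspective_norm_smul f hc x
  exact ⟨convexOn_univ_of_subadditive_of_homogeneous (hconv.perspective_norm_add_le hconj) hhom,
    hhom⟩
end

section
/- Let β > 0 and let w₁, …, w_m ∈ ℝ^d. Define p : ℝ^d → ℝ by p(x) = β ‖x‖ · log(∑_{i=1}^m exp(⟨w_i, x⟩ / ‖x‖)) for x ≠ 0 and p(0) = 0. Then p is sublinear (subadditive and positively homogeneous) and infinitely differentiable on ℝ^d \ {0}. -/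
open RealInnerProductSpace

open Real Finset in
/-- For `q ≥ 1` and nonnegative `f`, `∑ f i ^ q ≤ (∑ f i) ^ q`. -/
lemma aux_sum_rpow_le_rpow_sum {ι : Type*} (s : Finset ι) (f : ι → ℝ) (hf : ∀ i, 0 ≤ f i)
    {q : ℝ} (hq : 1 ≤ q) : ∑ i ∈ s, f i ^ q ≤ (∑ i ∈ s, f i) ^ q := by
  set S := ∑ i ∈ s, f i with hS
  have hS0 : 0 ≤ S := Finset.sum_nonneg fun i _ => hf i
  have hq' : q = 1 + (q - 1) := by ring
  have hqne : (1 : ℝ) + (q - 1) ≠ 0 := by rw [← hq']; linarith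
  have key : ∀ i ∈ s, f i ^ q ≤ f i * S ^ (q - 1) := by
    intro i hi
    have h1 : f i ^ q = f i * f i ^ (q - 1) := by
      nth_rewrite 1 [hq']
      rw [Real.rpow_add' (hf i) hqne, Real.rpow_one]
    rw [h1]
    refine mul_le_mul_of_nonneg_left ?_ (hf i)
    exact Real.rpow_le_rpow (hf i) (Finset.single_le_sum (fun j _ => hf j) hi) (by linarith)
  calc ∑ i ∈ s, f i ^ q ≤ ∑ i ∈ s, f i * S ^ (q - 1) := Finset.sum_le_sum key
    _ = S * S ^ (q - 1) := by rw [← Finset.sum_mul]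
    _ = S ^ q := by
        nth_rewrite 2 [hq']
        rw [Real.rpow_add' hS0 hqne, Real.rpow_one]

open Real Finset in
/-- Monotonicity of `t ↦ t * log (∑ exp (v i / t))` for `0 < t`. -/
lemma aux_mono {m : ℕ} (hm : 0 < m) (v : Fin m → ℝ) {c t : ℝ} (hc : 0 < c) (hct : c ≤ t) :
    c * Real.log (∑ i, Real.exp (v i / c)) ≤ t * Real.log (∑ i, Real.exp (v i / t)) := by
  have ht : 0 < t := lt_of_lt_of_le hc hct
  have hq : 1 ≤ t / c := (one_le_div hc).2 hct
  have hne : Nonempty (Fin m) := ⟨⟨0, hm⟩⟩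
  have hTpos : 0 < ∑ i, Real.exp (v i / t) :=
    Finset.sum_pos (fun i _ => Real.exp_pos _) Finset.univ_nonempty
  have hstep : ∀ i : Fin m, Real.exp (v i / c) = Real.exp (v i / t) ^ (t / c) := by
    intro i
    rw [← Real.exp_mul]
    congr 1
    field_simp
  have h1 : ∑ i, Real.exp (v i / c) ≤ (∑ i, Real.exp (v i / t)) ^ (t / c) := by
    calc ∑ i, Real.exp (v i / c) = ∑ i, Real.exp (v i / t) ^ (t / c) := by
          exact Finset.sum_congr rfl fun i _ => hstep i
      _ ≤ (∑ i, Real.exp (v i / t)) ^ (t / c) :=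
          aux_sum_rpow_le_rpow_sum _ _ (fun i => (Real.exp_pos _).le) hq
  have h2 : Real.log (∑ i, Real.exp (v i / c)) ≤ (t / c) * Real.log (∑ i, Real.exp (v i / t)) := by
    calc Real.log (∑ i, Real.exp (v i / c)) ≤ Real.log ((∑ i, Real.exp (v i / t)) ^ (t / c)) :=
          Real.log_le_log (Finset.sum_pos (fun i _ => Real.exp_pos _) Finset.univ_nonempty) h1
      _ = (t / c) * Real.log (∑ i, Real.exp (v i / t)) := Real.log_rpow hTpos _
  calc c * Real.log (∑ i, Real.exp (v i / c))
      ≤ c * ((t / c) * Real.log (∑ i, Real.exp (v i / t))) :=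
        mul_le_mul_of_nonneg_left h2 hc.le
    _ = t * Real.log (∑ i, Real.exp (v i / t)) := by field_simp

open Real Finset in
/-- Hölder step. -/
lemma aux_holder {m : ℕ} (hm : 0 < m) (vx vy : Fin m → ℝ) {a b : ℝ} (ha : 0 < a) (hb : 0 < b) :
    (a + b) * Real.log (∑ i, Real.exp ((vx i + vy i) / (a + b))) ≤
      a * Real.log (∑ i, Real.exp (vx i / a)) + b * Real.log (∑ i, Real.exp (vy i / b)) := by
  have hab : 0 < a + b := by linarith
  have hne : Nonempty (Fin m) := ⟨⟨0, hm⟩⟩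
  have hpq : Real.HolderConjugate ((a + b) / a) ((a + b) / b) := by
    constructor
    · rw [inv_div, inv_div, inv_one]; field_simp
    · positivity
    · positivity
  have hSx : 0 < ∑ i, Real.exp (vx i / a) :=
    Finset.sum_pos (fun i _ => Real.exp_pos _) Finset.univ_nonempty
  have hSy : 0 < ∑ i, Real.exp (vy i / b) :=
    Finset.sum_pos (fun i _ => Real.exp_pos _) Finset.univ_nonempty
  have hfp : ∀ i : Fin m, Real.exp (vx i / (a + b)) ^ ((a + b) / a) = Real.exp (vx i / a) := by
    intro i
    rw [← Real.exp_mul]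
    congr 1; field_simp
  have hgq : ∀ i : Fin m, Real.exp (vy i / (a + b)) ^ ((a + b) / b) = Real.exp (vy i / b) := by
    intro i
    rw [← Real.exp_mul]
    congr 1; field_simp
  have holder := Real.inner_le_Lp_mul_Lq_of_nonneg Finset.univ hpq
    (f := fun i => Real.exp (vx i / (a + b))) (g := fun i => Real.exp (vy i / (a + b)))
    (fun i _ => (Real.exp_pos _).le) (fun i _ => (Real.exp_pos _).le)
  have h1 : ∑ i, Real.exp ((vx i + vy i) / (a + b)) ≤
      (∑ i, Real.exp (vx i / a)) ^ (a / (a + b)) *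
        (∑ i, Real.exp (vy i / b)) ^ (b / (a + b)) := by
    have e1 : ∀ i : Fin m, Real.exp ((vx i + vy i) / (a + b)) =
        Real.exp (vx i / (a + b)) * Real.exp (vy i / (a + b)) := by
      intro i; rw [← Real.exp_add]; congr 1; field_simp
    calc ∑ i, Real.exp ((vx i + vy i) / (a + b))
        = ∑ i, Real.exp (vx i / (a + b)) * Real.exp (vy i / (a + b)) :=
          Finset.sum_congr rfl fun i _ => e1 i
      _ ≤ (∑ i, Real.exp (vx i / (a + b)) ^ ((a + b) / a)) ^ (1 / ((a + b) / a)) *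
            (∑ i, Real.exp (vy i / (a + b)) ^ ((a + b) / b)) ^ (1 / ((a + b) / b)) := holder
      _ = (∑ i, Real.exp (vx i / a)) ^ (a / (a + b)) *
            (∑ i, Real.exp (vy i / b)) ^ (b / (a + b)) := by
          rw [one_div_div, one_div_div]
          congr 2
          · exact Finset.sum_congr rfl fun i _ => hfp i
          · exact Finset.sum_congr rfl fun i _ => hgq i
  have h2 : Real.log (∑ i, Real.exp ((vx i + vy i) / (a + b))) ≤
      (a / (a + b)) * Real.log (∑ i, Real.exp (vx i / a)) +
        (b / (a + b)) * Real.log (∑ i, Real.exp (vy i / b)) := by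
    calc Real.log (∑ i, Real.exp ((vx i + vy i) / (a + b)))
        ≤ Real.log ((∑ i, Real.exp (vx i / a)) ^ (a / (a + b)) *
            (∑ i, Real.exp (vy i / b)) ^ (b / (a + b))) :=
          Real.log_le_log (Finset.sum_pos (fun i _ => Real.exp_pos _) Finset.univ_nonempty) h1
      _ = (a / (a + b)) * Real.log (∑ i, Real.exp (vx i / a)) +
            (b / (a + b)) * Real.log (∑ i, Real.exp (vy i / b)) := by
          rw [Real.log_mul (by positivity) (by positivity), Real.log_rpow hSx, Real.log_rpow hSy]
  calc (a + b) * Real.log (∑ i, Real.exp ((vx i + vy i) / (a + b)))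
      ≤ (a + b) * ((a / (a + b)) * Real.log (∑ i, Real.exp (vx i / a)) +
          (b / (a + b)) * Real.log (∑ i, Real.exp (vy i / b))) :=
        mul_le_mul_of_nonneg_left h2 hab.le
    _ = a * Real.log (∑ i, Real.exp (vx i / a)) + b * Real.log (∑ i, Real.exp (vy i / b)) := by
        field_simp

/-- For `β > 0` and `w₁, …, w_m ∈ ℝ^d`, the function
`p x = β ‖x‖ log (∑ i, exp (⟪w i, x⟫ / ‖x‖))` (with `p 0 = 0`) is sublinear (subadditive and
positively homogeneous) and infinitely differentiable away from the origin. -/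
theorem stmt_3 {d m : ℕ} (β : ℝ) (hβ : 0 < β) (w : Fin m → EuclideanSpace ℝ (Fin d))
    (p : EuclideanSpace ℝ (Fin d) → ℝ)
    (hp : ∀ x : EuclideanSpace ℝ (Fin d), x ≠ 0 →
      p x = β * (‖x‖ * Real.log (∑ i, Real.exp (⟪w i, x⟫ / ‖x‖))))
    (hp0 : p 0 = 0) :
    (∀ x y, p (x + y) ≤ p x + p y) ∧
    (∀ c : ℝ, 0 ≤ c → ∀ x, p (c • x) = c * p x) ∧
    ContDiffOn ℝ (⊤ : ℕ∞) p {x : EuclideanSpace ℝ (Fin d) | x ≠ 0} := by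
  -- homogeneity (works for any m)
  have hom : ∀ c : ℝ, 0 ≤ c → ∀ x, p (c • x) = c * p x := by
    intro c hc x
    rcases eq_or_lt_of_le hc with hc0 | hc0
    · subst hc0; simp [hp0]
    rcases eq_or_ne x 0 with rfl | hx
    · simp [hp0]
    have hcx : c • x ≠ 0 := smul_ne_zero hc0.ne' hx
    have hnorm : ‖c • x‖ = c * ‖x‖ := by
      rw [norm_smul, Real.norm_eq_abs, abs_of_pos hc0]
    rw [hp _ hcx, hp _ hx, hnorm]
    have hinner : ∀ i : Fin m, ⟪w i, c • x⟫ / (c * ‖x‖) = ⟪w i, x⟫ / ‖x‖ := by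
      intro i
      rw [real_inner_smul_right, mul_div_mul_left _ _ hc0.ne']
    simp_rw [hinner]
    ring
  refine ⟨?_, hom, ?_⟩
  · -- subadditivity
    intro x y
    rcases eq_or_ne x 0 with rfl | hx
    · simp [hp0]
    rcases eq_or_ne y 0 with rfl | hy
    · simp [hp0]
    rcases Nat.eq_zero_or_pos m with rfl | hm
    · -- m = 0 : p vanishes everywhere
      have hz : ∀ z : EuclideanSpace ℝ (Fin d), p z = 0 := by
        intro z
        rcases eq_or_ne z 0 with rfl | hz
        · exact hp0
        · rw [hp z hz]; simp
      simp [hz]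
    have ha : (0:ℝ) < ‖x‖ := norm_pos_iff.2 hx
    have hb : (0:ℝ) < ‖y‖ := norm_pos_iff.2 hy
    rcases eq_or_ne (x + y) 0 with hxy | hxy
    · -- x + y = 0 : need 0 ≤ p x + p y
      rw [hxy, hp0, hp x hx, hp y hy]
      have hy' : y = -x := by linear_combination (norm := module) hxy
      have hba : ‖y‖ = ‖x‖ := by rw [hy', norm_neg]
      haveI : Nonempty (Fin m) := ⟨⟨0, hm⟩⟩
      have hSx : 0 < ∑ i, Real.exp (⟪w i, x⟫ / ‖x‖) :=
        Finset.sum_pos (fun i _ => Real.exp_pos _) Finset.univ_nonempty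
      have hSy : 0 < ∑ i, Real.exp (⟪w i, y⟫ / ‖y‖) :=
        Finset.sum_pos (fun i _ => Real.exp_pos _) Finset.univ_nonempty
      -- Cauchy–Schwarz : m^2 ≤ Sx * Sy
      have hcs : ((m : ℝ)) ^ 2 ≤ (∑ i, Real.exp (⟪w i, x⟫ / ‖x‖)) *
          (∑ i, Real.exp (⟪w i, y⟫ / ‖y‖)) := by
        have key := Finset.sum_mul_sq_le_sq_mul_sq Finset.univ
          (fun i : Fin m => Real.exp (⟪w i, x⟫ / ‖x‖ / 2))
          (fun i : Fin m => Real.exp (⟪w i, y⟫ / ‖y‖ / 2))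
        have e1 : ∀ i : Fin m, Real.exp (⟪w i, x⟫ / ‖x‖ / 2) *
            Real.exp (⟪w i, y⟫ / ‖y‖ / 2) = 1 := by
          intro i
          rw [← Real.exp_add, ← Real.exp_zero]
          congr 1
          rw [hy', inner_neg_right, norm_neg]
          ring
        have e2 : ∀ (z : ℝ), Real.exp (z / 2) ^ 2 = Real.exp z := by
          intro z
          rw [sq, ← Real.exp_add]
          congr 1
          ring
        simp only [e1, e2, Finset.sum_const, Finset.card_univ, Fintype.card_fin,
          nsmul_eq_mul, mul_one] at key
        exact key
      have hlog : 0 ≤ Real.log (∑ i, Real.exp (⟪w i, x⟫ / ‖x‖)) +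
          Real.log (∑ i, Real.exp (⟪w i, y⟫ / ‖y‖)) := by
        rw [← Real.log_mul hSx.ne' hSy.ne']
        refine Real.log_nonneg ?_
        have h1 : (1:ℝ) ≤ (m:ℝ)^2 := by
          have : (1:ℝ) ≤ (m:ℝ) := by exact_mod_cast hm
          nlinarith
        linarith
      have e3 : β * (‖y‖ * Real.log (∑ i, Real.exp (⟪w i, y⟫ / ‖y‖))) =
          β * (‖x‖ * Real.log (∑ i, Real.exp (⟪w i, y⟫ / ‖y‖))) := by rw [hba]
      nlinarith [e3, mul_nonneg (by positivity : (0:ℝ) ≤ β * ‖x‖) hlog]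
    have hc : (0:ℝ) < ‖x + y‖ := norm_pos_iff.2 hxy
    rw [hp _ hxy, hp _ hx, hp _ hy]
    have hstep1 := aux_mono hm (fun i => ⟪w i, x + y⟫) hc (norm_add_le x y)
    have hstep2 := aux_holder hm (fun i => ⟪w i, x⟫) (fun i => ⟪w i, y⟫) ha hb
    simp only [inner_add_right] at hstep1
    have hmain : ‖x + y‖ * Real.log (∑ i, Real.exp (⟪w i, x + y⟫ / ‖x + y‖)) ≤
        ‖x‖ * Real.log (∑ i, Real.exp (⟪w i, x⟫ / ‖x‖)) +
          ‖y‖ * Real.log (∑ i, Real.exp (⟪w i, y⟫ / ‖y‖)) := by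
      simp only [inner_add_right]
      exact le_trans hstep1 hstep2
    nlinarith [hmain]
  · -- smoothness
    rcases Nat.eq_zero_or_pos m with rfl | hm
    · have : ∀ z ∈ {x : EuclideanSpace ℝ (Fin d) | x ≠ 0}, p z = 0 := by
        intro z hz; rw [hp z hz]; simp
      exact (contDiffOn_const (c := (0:ℝ))).congr this
    set s : Set (EuclideanSpace ℝ (Fin d)) := {x | x ≠ 0} with hs
    have hnorm : ContDiffOn ℝ (⊤ : ℕ∞) (fun x : EuclideanSpace ℝ (Fin d) => ‖x‖) s :=
      (contDiffOn_id).norm ℝ fun x hx => hx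
    have hinner : ∀ i : Fin m, ContDiffOn ℝ (⊤ : ℕ∞)
        (fun x : EuclideanSpace ℝ (Fin d) => ⟪w i, x⟫) s := fun i =>
      ((contDiff_const.inner ℝ contDiff_id)).contDiffOn
    have hS : ContDiffOn ℝ (⊤ : ℕ∞)
        (fun x : EuclideanSpace ℝ (Fin d) => ∑ i, Real.exp (⟪w i, x⟫ / ‖x‖)) s := by
      refine ContDiffOn.sum fun i _ => ?_
      exact ((hinner i).div hnorm fun x hx => (norm_pos_iff.2 hx).ne').exp
    haveI : Nonempty (Fin m) := ⟨⟨0, hm⟩⟩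
    have hSpos : ∀ x ∈ s, (∑ i, Real.exp (⟪w i, x⟫ / ‖x‖)) ≠ 0 := by
      intro x hx
      exact (Finset.sum_pos (fun i _ => Real.exp_pos _)
        Finset.univ_nonempty).ne'
    have hq : ContDiffOn ℝ (⊤ : ℕ∞) (fun x : EuclideanSpace ℝ (Fin d) =>
        β * (‖x‖ * Real.log (∑ i, Real.exp (⟪w i, x⟫ / ‖x‖)))) s :=
      contDiffOn_const.mul (hnorm.mul (hS.log hSpos))
    exact hq.congr fun x hx => hp x hx
end

section
/- Let K ⊆ ℝ^d be a compact convex set with 0 in its interior, and let ε > 0. Then there exist m ∈ ℕ, β > 0 and vectors w₁, …, w_m ∈ ℝ^d such that, defining p : ℝ^d → ℝ by p(x) = β ‖x‖ · log(∑_{i=1}^m exp(⟨w_i, x⟩ / (β ‖x‖))) for x ≠ 0 and p(0) = 0, and Ω := {x ∈ ℝ^d : ⟨x, u⟩ ≤ p(u) for all u ∈ ℝ^d}, the Hausdorff distance between K and Ω is at most ε. In other words, the class of convex sets whose support function is a sublinear log-sum-exp network is dense, for the Hausdorff distance, in the class of convex bodies containing 0 in their interior. -/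
/-!
Take a finite `ε`-net `w₁, …, w_m` of `K` inside `K` and let `C ⊆ K` be its convex hull.
With temperature `t = β ‖u‖`, the network value `p u = t log ∑ exp (⟪wᵢ, u⟫ / t)` is a soft
maximum of the `⟪wᵢ, u⟫`: it lies between `h_C(u) = maxᵢ ⟪wᵢ, u⟫` and `h_C(u) + β log m ‖u‖`.
The lower bound gives `C ⊆ Ω`, so `K` is within `ε` of `Ω`; the upper bound, tested against
`u = x - π_C x`, shows that every `x ∈ Ω` is within `β log m` of `C`. Choosing `β log m ≤ ε`
finishes the proof.
-/

open RealInnerProductSpace Metric Set Real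

section SoftMax

variable {ι : Type*} [Fintype ι] {t : ℝ}

theorem le_mul_log_sum_exp_div (a : ι → ℝ) (ht : 0 < t) (i : ι) :
    a i ≤ t * log (∑ j, exp (a j / t)) := by
  have hi : exp (a i / t) ≤ ∑ j, exp (a j / t) :=
    Finset.single_le_sum (f := fun j => exp (a j / t)) (fun j _ => (exp_pos _).le)
      (Finset.mem_univ i)
  have := (le_log_iff_exp_le ((exp_pos _).trans_le hi)).2 hi
  rwa [div_le_iff₀' ht] at this

theorem mul_log_sum_exp_div_le [Nonempty ι] (a : ι → ℝ) (ht : 0 < t) {M : ℝ}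
    (hM : ∀ i, a i ≤ M) :
    t * log (∑ j, exp (a j / t)) ≤ M + t * log (Fintype.card ι) := by
  have hsum : ∑ j, exp (a j / t) ≤ Fintype.card ι * exp (M / t) := by
    calc ∑ j, exp (a j / t) ≤ ∑ _j : ι, exp (M / t) :=
          Finset.sum_le_sum fun j _ => exp_le_exp.2 (div_le_div_of_nonneg_right (hM j) ht.le)
      _ = Fintype.card ι * exp (M / t) := by simp
  have hlog : log (∑ j, exp (a j / t)) ≤ log (Fintype.card ι) + M / t := by
    calc log (∑ j, exp (a j / t)) ≤ log (Fintype.card ι * exp (M / t)) :=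
          log_le_log (Finset.sum_pos (fun j _ => exp_pos _) Finset.univ_nonempty) hsum
      _ = log (Fintype.card ι) + M / t := by
          rw [log_mul (by positivity) (exp_ne_zero _), log_exp]
  calc t * log (∑ j, exp (a j / t)) ≤ t * (log (Fintype.card ι) + M / t) :=
        mul_le_mul_of_nonneg_left hlog ht.le
    _ = M + t * log (Fintype.card ι) := by field_simp; ring

end SoftMax

theorem IsCompact.exists_fin_dist_lt {X : Type*} [PseudoMetricSpace X] {K : Set X}
    (hK : IsCompact K) {ε : ℝ} (hε : 0 < ε) :
    ∃ (m : ℕ) (w : Fin m → X), range w ⊆ K ∧ ∀ x ∈ K, ∃ i, dist x (w i) < ε := by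
  obtain ⟨s, hsK, hs, hcover⟩ := hK.finite_cover_balls hε
  obtain ⟨m, w, rfl⟩ := hs.fin_embedding
  refine ⟨m, w, hsK, fun x hx => ?_⟩
  obtain ⟨_, ⟨i, rfl⟩, hi⟩ := mem_iUnion₂.1 (hcover hx)
  exact ⟨i, hi⟩

variable {E : Type*} [NormedAddCommGroup E] [InnerProductSpace ℝ E]

/-- If `⟪x, u⟫ ≤ h_C(u) + r ‖u‖` for all `u`, with `h_C` the support function of `C`, then `x`
is within `r` of `C`; `h_C` is encoded by its upper bounds `M`. -/
theorem infDist_le_of_forall_inner_le {C : Set E} (hne : C.Nonempty) (hcomplete : IsComplete C)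
    (hconv : Convex ℝ C) {x : E} {r : ℝ} (hr : 0 ≤ r)
    (h : ∀ u ≠ 0, ∀ M, (∀ c ∈ C, ⟪c, u⟫ ≤ M) → ⟪x, u⟫ ≤ M + r * ‖u‖) :
    infDist x C ≤ r := by
  obtain ⟨v, hvC, hv⟩ := exists_norm_eq_iInf_of_complete_convex hne hcomplete hconv x
  have hproj := (norm_eq_iInf_iff_real_inner_le_zero hconv hvC).1 hv
  refine (infDist_le_dist_of_mem hvC).trans ?_
  rw [dist_eq_norm]
  rcases eq_or_ne (x - v) 0 with hxv | hxv
  · simpa [hxv] using hr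
  have hsep : ∀ c ∈ C, ⟪c, x - v⟫ ≤ ⟪v, x - v⟫ := fun c hc => by
    have := hproj c hc
    rw [real_inner_comm, inner_sub_left] at this
    linarith
  have hsq : ‖x - v‖ ^ 2 ≤ r * ‖x - v‖ := by
    have := h _ hxv _ hsep
    rw [← real_inner_self_eq_norm_sq, inner_sub_left]
    linarith
  nlinarith [norm_pos_iff.2 hxv]

def wulffShape (p : E → ℝ) : Set E :=
  {x | ∀ u, ⟪x, u⟫ ≤ p u}

theorem convex_wulffShape (p : E → ℝ) : Convex ℝ (wulffShape p) := by
  intro x hx y hy a b ha hb hab u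
  calc ⟪a • x + b • y, u⟫ = a * ⟪x, u⟫ + b * ⟪y, u⟫ := by
        rw [inner_add_left, real_inner_smul_left, real_inner_smul_left]
    _ ≤ a * p u + b * p u := by gcongr <;> simp_all [wulffShape]
    _ = p u := by rw [← add_mul, hab, one_mul]

open Classical in
noncomputable def lseNetwork {ι : Type*} [Fintype ι] (β : ℝ) (w : ι → E) (x : E) : ℝ :=
  if x = 0 then 0 else β * (‖x‖ * log (∑ i, exp (⟪w i, x⟫ / (β * ‖x‖))))

section LseNetwork

variable {ι : Type*} [Fintype ι] {β : ℝ} {w : ι → E}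

theorem lseNetwork_zero : lseNetwork β w 0 = 0 := if_pos rfl

theorem lseNetwork_of_ne_zero {u : E} (hu : u ≠ 0) :
    lseNetwork β w u = β * (‖u‖ * log (∑ i, exp (⟪w i, u⟫ / (β * ‖u‖)))) :=
  if_neg hu

theorem inner_le_lseNetwork (hβ : 0 < β) (i : ι) (u : E) : ⟪w i, u⟫ ≤ lseNetwork β w u := by
  rcases eq_or_ne u 0 with rfl | hu
  · simp [lseNetwork_zero]
  rw [lseNetwork_of_ne_zero hu, ← mul_assoc]
  exact le_mul_log_sum_exp_div (fun j => ⟪w j, u⟫) (by positivity) i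

theorem lseNetwork_le [Nonempty ι] (hβ : 0 < β) {u : E} (hu : u ≠ 0) {M : ℝ}
    (hM : ∀ i, ⟪w i, u⟫ ≤ M) :
    lseNetwork β w u ≤ M + β * log (Fintype.card ι) * ‖u‖ := by
  rw [lseNetwork_of_ne_zero hu, ← mul_assoc]
  exact (mul_log_sum_exp_div_le (fun j => ⟪w j, u⟫) (by positivity) hM).trans_eq (by ring)

theorem range_subset_wulffShape_lseNetwork (hβ : 0 < β) :
    range w ⊆ wulffShape (lseNetwork β w) :=
  range_subset_iff.2 fun i u => inner_le_lseNetwork hβ i u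

theorem infDist_convexHull_le_of_mem_wulffShape [Nonempty ι] (hβ : 0 < β) {x : E}
    (hx : x ∈ wulffShape (lseNetwork β w)) :
    infDist x (convexHull ℝ (range w)) ≤ β * log (Fintype.card ι) := by
  refine infDist_le_of_forall_inner_le ((range_nonempty w).convexHull)
    ((finite_range w).isCompact_convexHull (𝕜 := ℝ) |>.isComplete) (convex_convexHull ℝ _)
    (mul_nonneg hβ.le (log_natCast_nonneg _)) fun u hu M hM => ?_
  exact (hx u).trans (lseNetwork_le hβ hu fun i => hM _ (subset_convexHull ℝ _ (mem_range_self i)))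

end LseNetwork

/-- Convex sets whose *support function* is a sublinear log-sum-exp network are
dense, for the Hausdorff distance, among convex bodies containing `0` in their interior: for every
compact convex `K ⊆ ℝ^d` with `0 ∈ int K` and every `ε > 0` there are `m`, `β > 0` and
`w₁, …, w_m` such that, with `p x = β ‖x‖ log (∑ i, exp (⟪w i, x⟫ / (β ‖x‖)))`, `p 0 = 0` and
`Ω = {x | ∀ u, ⟪x, u⟫ ≤ p u}`, one has `d_H(K, Ω) ≤ ε`. -/
theorem stmt_6 {d : ℕ} (K : Set (EuclideanSpace ℝ (Fin d)))
    (hKc : IsCompact K) (hKconv : Convex ℝ K)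
    (hK0 : (0 : EuclideanSpace ℝ (Fin d)) ∈ interior K)
    (ε : ℝ) (hε : 0 < ε) :
    ∃ (m : ℕ) (β : ℝ) (w : Fin m → EuclideanSpace ℝ (Fin d))
      (p : EuclideanSpace ℝ (Fin d) → ℝ),
      0 < β ∧
      (∀ x : EuclideanSpace ℝ (Fin d), x ≠ 0 →
        p x = β * (‖x‖ * Real.log (∑ i, Real.exp (⟪w i, x⟫ / (β * ‖x‖))))) ∧
      p 0 = 0 ∧
      Metric.hausdorffDist K
        {x : EuclideanSpace ℝ (Fin d) | ∀ u : EuclideanSpace ℝ (Fin d), ⟪x, u⟫ ≤ p u} ≤ ε := by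
  obtain ⟨m, w, hwK, hnet⟩ := hKc.exists_fin_dist_lt hε
  have : Nonempty (Fin m) := (hnet 0 (interior_subset hK0)).nonempty
  have hlog : 0 ≤ log m := log_natCast_nonneg m
  set β := ε / (log m + 1)
  have hβ : 0 < β := by positivity
  have hβε : β * log m ≤ ε := by
    rw [div_mul_eq_mul_div, div_le_iff₀ (by positivity)]
    nlinarith
  refine ⟨m, β, w, lseNetwork β w, hβ, fun x hx => lseNetwork_of_ne_zero hx,
    lseNetwork_zero, ?_⟩
  refine hausdorffDist_le_of_infDist hε.le (fun x hx => ?_) (fun x hx => ?_)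
  · obtain ⟨i, hi⟩ := hnet x hx
    exact (infDist_le_dist_of_mem
      (range_subset_wulffShape_lseNetwork hβ (mem_range_self i))).trans hi.le
  · calc infDist x K ≤ infDist x (convexHull ℝ (range w)) :=
          infDist_le_infDist_of_subset (convexHull_min hwK hKconv) (range_nonempty w).convexHull
      _ ≤ β * log (Fintype.card (Fin m)) := infDist_convexHull_le_of_mem_wulffShape hβ hx
      _ ≤ ε := by simpa using hβε
end
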